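/- Let X be a path-connected Hausdorff space, x₀ ∈ X, and α a path in X from x₀ to y. Suppose {f_k}_{k∈ℕ} is a sequence of n-loops in Ω^n(X, x₀) that converges to x₀ (every neighborhood of x₀ eventually contains all images). Then the infinite concatenation ∏_{k=1}^∞ f_k, defined on the standard n-domain by placing f_k (rescaled) on R_k = [(k−1)/k, k/(k+1)] × I^{n−1} and sending the complement to x₀, is a continuous map (I^n, ∂I^n) → (X, x₀). -/

import Mathlib

/-!
On the closed block `blockStart k ≤ z 0 ≤ blockStart (k + 1)` the concatenation agrees with the
continuous map `f k` precomposed with the rescaling of that block onto `I`; where two blocks meet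
both pieces equal `x₀`, because the loops are constant on the boundary. A point with `z 0 < 1`
has a neighbourhood covered by finitely many closed blocks, so the concatenation is continuous
there by gluing. A neighbourhood of the face `z 0 = 1` meets only blocks of large index, whose
images lie in any given neighbourhood of `x₀` since the loops converge to `x₀`.
-/

open Set unitInterval

/-- A countable family of maps clusters at (converges toward) a point. -/
def ClustersAt {K Z X : Type*} [TopologicalSpace Z] [TopologicalSpace X]
    (f : K → C(Z, X)) (x : X) : Prop :=
  ∀ U ∈ nhds x, {k : K | ¬ Set.range (f k) ⊆ U}.Finite

/-- The increasing affine map of `I` onto the `k`-th block `[k/(k+1), (k+1)/(k+2)]` of the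
standard `n`-domain. -/
noncomputable def blockPt (k : ℕ) (t : I) : I :=
  ⟨(1 - (t : ℝ)) * (k / (k + 1)) + (t : ℝ) * ((k + 1) / (k + 2)), by
    have h0 : (0:ℝ) ≤ (k : ℝ) / (k + 1) := by positivity
    have h1 : ((k : ℝ)) / (k + 1) ≤ 1 := by
      rw [div_le_one (by positivity)]; linarith
    have h0' : (0:ℝ) ≤ ((k : ℝ) + 1) / (k + 2) := by positivity
    have h1' : ((k : ℝ) + 1) / (k + 2) ≤ 1 := by
      rw [div_le_one (by positivity)]; linarith
    have ht0 : (0:ℝ) ≤ (t : ℝ) := t.2.1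
    have ht1 : (t : ℝ) ≤ 1 := t.2.2
    constructor
    · nlinarith
    · nlinarith⟩

open Filter Topology Function

noncomputable def blockStart (k : ℕ) : ℝ := k / (k + 1)

lemma blockStart_lt_one (k : ℕ) : blockStart k < 1 := by
  rw [blockStart, div_lt_one (by positivity)]; linarith

lemma blockStart_succ (k : ℕ) : blockStart (k + 1) = ((k : ℝ) + 1) / ((k : ℝ) + 2) := by
  rw [blockStart]; push_cast; ring

lemma blockStart_lt_succ (k : ℕ) : blockStart k < blockStart (k + 1) := by
  rw [blockStart_succ, blockStart, div_lt_div_iff₀ (by positivity) (by positivity)]; linarith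

lemma blockStart_le_iff {s : ℝ} (k : ℕ) (hs : s < 1) :
    blockStart k ≤ s ↔ (k : ℝ) ≤ s / (1 - s) := by
  rw [blockStart, div_le_iff₀ (by positivity), le_div_iff₀ (by linarith)]
  constructor <;> intro h <;> linarith

noncomputable def blockIndex (s : ℝ) : ℕ := ⌊s / (1 - s)⌋₊

lemma le_blockIndex_iff {s : ℝ} (k : ℕ) (h0 : 0 ≤ s) (h1 : s < 1) :
    k ≤ blockIndex s ↔ blockStart k ≤ s := by
  rw [blockIndex, Nat.le_floor_iff (div_nonneg h0 (by linarith)), blockStart_le_iff k h1]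

lemma blockIndex_eq_iff {s : ℝ} (k : ℕ) (h0 : 0 ≤ s) (h1 : s < 1) :
    blockIndex s = k ↔ s ∈ Ico (blockStart k) (blockStart (k + 1)) := by
  rw [le_antisymm_iff, ← not_lt, Nat.lt_iff_add_one_le, le_blockIndex_iff _ h0 h1,
    le_blockIndex_iff _ h0 h1, not_le, and_comm, mem_Ico]

lemma blockStart_blockIndex_succ_gt {s : ℝ} (h0 : 0 ≤ s) (h1 : s < 1) :
    s < blockStart (blockIndex s + 1) :=
  ((blockIndex_eq_iff _ h0 h1).1 rfl).2

noncomputable def blockCoord (k : ℕ) (s : ℝ) : I :=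
  projIcc 0 1 zero_le_one ((s - blockStart k) / (blockStart (k + 1) - blockStart k))

lemma continuous_blockCoord (k : ℕ) : Continuous (blockCoord k) :=
  continuous_projIcc.comp (by fun_prop)

lemma blockCoord_of_le {s : ℝ} {k : ℕ} (h : s ≤ blockStart k) : blockCoord k s = 0 :=
  projIcc_of_le_left _ (div_nonpos_of_nonpos_of_nonneg (by linarith)
    (by linarith [blockStart_lt_succ k]))

lemma blockCoord_of_ge {s : ℝ} {k : ℕ} (h : blockStart (k + 1) ≤ s) : blockCoord k s = 1 :=
  projIcc_of_right_le _ ((one_le_div (by linarith [blockStart_lt_succ k])).2 (by linarith))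

lemma coe_blockPt (k : ℕ) (t : I) :
    (blockPt k t : ℝ) = blockStart k + t * (blockStart (k + 1) - blockStart k) := by
  rw [blockStart_succ, blockStart, blockPt]; ring

lemma coe_blockPt_mem_Icc (k : ℕ) (t : I) :
    (blockPt k t : ℝ) ∈ Icc (blockStart k) (blockStart (k + 1)) := by
  have hlt := blockStart_lt_succ k
  rw [coe_blockPt]
  constructor <;> nlinarith [t.2.1, t.2.2]

lemma blockCoord_blockPt (k : ℕ) (t : I) : blockCoord k (blockPt k t) = t := by
  have hpos : 0 < blockStart (k + 1) - blockStart k := sub_pos.2 (blockStart_lt_succ k)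
  rw [blockCoord, coe_blockPt, add_sub_cancel_left, mul_div_cancel_right₀ _ hpos.ne']
  exact projIcc_val zero_le_one t

section Concatenation

variable {X : Type*} [TopologicalSpace X] {n : ℕ}

lemma apply_update_zero_of_endpoint {g : C(Fin (n + 1) → I, X)} {x₀ : X}
    (hg : ∀ z ∈ Cube.boundary (Fin (n + 1)), g z = x₀) (w : Fin (n + 1) → I) {t : I}
    (ht : t = 0 ∨ t = 1) : g (update w 0 t) = x₀ :=
  hg _ ⟨0, by rwa [update_self]⟩

noncomputable def blockChart (k : ℕ) : C(Fin (n + 1) → I, Fin (n + 1) → I) where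
  toFun w := update w 0 (blockCoord k (w 0))
  continuous_toFun := continuous_id.update 0 ((continuous_blockCoord k).comp (by fun_prop))

lemma blockChart_apply (k : ℕ) (w : Fin (n + 1) → I) :
    blockChart k w = update w 0 (blockCoord k (w 0)) := rfl

noncomputable def infConcat (x₀ : X) (f : ℕ → C(Fin (n + 1) → I, X)) (w : Fin (n + 1) → I) :
    X :=
  if (w 0 : ℝ) < 1 then f (blockIndex (w 0)) (blockChart (blockIndex (w 0)) w) else x₀

variable {x₀ : X} {f : ℕ → C(Fin (n + 1) → I, X)}

lemma apply_blockChart_of_notMem_Ioo (hbd : ∀ k, ∀ z ∈ Cube.boundary (Fin (n + 1)), f k z = x₀)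
    {k : ℕ} {w : Fin (n + 1) → I} (h : (w 0 : ℝ) ∉ Ioo (blockStart k) (blockStart (k + 1))) :
    f k (blockChart k w) = x₀ := by
  rw [mem_Ioo, not_and_or, not_lt, not_lt] at h
  refine apply_update_zero_of_endpoint (hbd k) w ?_
  rcases h with h | h
  exacts [Or.inl (blockCoord_of_le h), Or.inr (blockCoord_of_ge h)]

-- At the common endpoint of two blocks both pieces take the value `x₀`.
lemma infConcat_eq_of_mem_Icc (hbd : ∀ k, ∀ z ∈ Cube.boundary (Fin (n + 1)), f k z = x₀)
    {k : ℕ} {w : Fin (n + 1) → I} (h : (w 0 : ℝ) ∈ Icc (blockStart k) (blockStart (k + 1))) :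
    infConcat x₀ f w = f k (blockChart k w) := by
  have h1 : (w 0 : ℝ) < 1 := h.2.trans_lt (blockStart_lt_one _)
  rw [infConcat, if_pos h1]
  rcases h.2.lt_or_eq with hlt | heq
  · rw [(blockIndex_eq_iff k (w 0).2.1 h1).2 ⟨h.1, hlt⟩]
  · have hidx : blockIndex (w 0) = k + 1 :=
      (blockIndex_eq_iff _ (w 0).2.1 h1).2 ⟨heq.ge, heq ▸ blockStart_lt_succ _⟩
    rw [hidx, apply_blockChart_of_notMem_Ioo hbd (fun hw => hw.1.ne' heq),
      apply_blockChart_of_notMem_Ioo hbd (fun hw => hw.2.ne heq)]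

lemma continuousAt_infConcat_of_lt_one
    (hbd : ∀ k, ∀ z ∈ Cube.boundary (Fin (n + 1)), f k z = x₀)
    {w : Fin (n + 1) → I} (hw : (w 0 : ℝ) < 1) : ContinuousAt (infConcat x₀ f) w := by
  let N := blockIndex (w 0) + 1
  let block (k : Fin N) : Set (Fin (n + 1) → I) :=
    (fun w' => (w' 0 : ℝ)) ⁻¹' Icc (blockStart k) (blockStart (k + 1))
  have hcoord : Continuous fun w' : Fin (n + 1) → I => (w' 0 : ℝ) := by fun_prop
  have hglue : ContinuousOn (infConcat x₀ f) (⋃ k, block k) :=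
    (locallyFinite_of_finite block).continuousOn_iUnion
      (fun k => isClosed_Icc.preimage hcoord)
      (fun k => ((f k).comp (blockChart k)).continuous.continuousOn.congr
        fun w' hw' => infConcat_eq_of_mem_Icc hbd hw')
  have hcover : {w' : Fin (n + 1) → I | (w' 0 : ℝ) < blockStart N} ⊆ ⋃ k, block k := by
    intro w' hw'
    have h1 : (w' 0 : ℝ) < 1 := hw'.trans (blockStart_lt_one N)
    have hk : blockIndex (w' 0) < N := by
      by_contra! hN
      exact (le_blockIndex_iff N (w' 0).2.1 h1).1 hN |>.not_gt hw'
    have hmem := (blockIndex_eq_iff _ (w' 0).2.1 h1).1 rfl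
    exact mem_iUnion.2 ⟨⟨_, hk⟩, hmem.1, hmem.2.le⟩
  refine hglue.continuousAt (mem_of_superset ?_ hcover)
  exact (isOpen_lt hcoord continuous_const).mem_nhds
    (blockStart_blockIndex_succ_gt (w 0).2.1 hw)

lemma continuousAt_infConcat_of_eq_one (hcl : ClustersAt f x₀) {w : Fin (n + 1) → I}
    (hw : w 0 = 1) : ContinuousAt (infConcat x₀ f) w := by
  rw [ContinuousAt, infConcat, if_neg (by simp [hw])]
  intro U hU
  have hfar : ∀ᶠ k in cofinite, range (f k) ⊆ U := hcl U hU
  obtain ⟨M, hM⟩ := eventually_atTop.1 (Nat.cofinite_eq_atTop ▸ hfar)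
  have hnear : {w' : Fin (n + 1) → I | blockStart M < w' 0} ∈ 𝓝 w :=
    (isOpen_lt continuous_const (by fun_prop)).mem_nhds (by simpa [hw] using blockStart_lt_one M)
  refine mem_map.2 (mem_of_superset hnear fun w' hw' => ?_)
  rw [mem_preimage, infConcat]
  split_ifs with h1
  · exact hM _ ((le_blockIndex_iff M (w' 0).2.1 h1).2 hw'.le) ⟨_, rfl⟩
  · exact mem_of_mem_nhds hU

lemma continuous_infConcat (hbd : ∀ k, ∀ z ∈ Cube.boundary (Fin (n + 1)), f k z = x₀)
    (hcl : ClustersAt f x₀) : Continuous (infConcat x₀ f) := by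
  refine continuous_iff_continuousAt.2 fun w => ?_
  rcases (w 0).2.2.lt_or_eq with h | h
  · exact continuousAt_infConcat_of_lt_one hbd h
  · exact continuousAt_infConcat_of_eq_one hcl (Subtype.ext h)

lemma infConcat_of_eq_one {w : Fin (n + 1) → I} (hw : w 0 = 1) : infConcat x₀ f w = x₀ := by
  rw [infConcat, if_neg (by simp [hw])]

lemma infConcat_of_mem_boundary (hbd : ∀ k, ∀ z ∈ Cube.boundary (Fin (n + 1)), f k z = x₀)
    {w : Fin (n + 1) → I} (hw : w ∈ Cube.boundary (Fin (n + 1))) : infConcat x₀ f w = x₀ := by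
  obtain ⟨i, hi⟩ := hw
  by_cases hi0 : i = 0
  · subst hi0
    rcases hi with h | h
    · have h0 : (w 0 : ℝ) ∈ Icc (blockStart 0) (blockStart (0 + 1)) := by
        simp [h, blockStart]
      rw [infConcat_eq_of_mem_Icc hbd h0, apply_blockChart_of_notMem_Ioo hbd]
      simp [h, blockStart]
    · exact infConcat_of_eq_one h
  · rw [infConcat]
    split_ifs
    · exact hbd _ _ ⟨i, by rwa [blockChart_apply, update_of_ne hi0]⟩
    · rfl

lemma infConcat_update_blockPt (hbd : ∀ k, ∀ z ∈ Cube.boundary (Fin (n + 1)), f k z = x₀)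
    (k : ℕ) (z : Fin (n + 1) → I) : infConcat x₀ f (update z 0 (blockPt k (z 0))) = f k z := by
  rw [infConcat_eq_of_mem_Icc hbd (by simpa using coe_blockPt_mem_Icc k (z 0)),
    blockChart_apply, update_self, update_idem, blockCoord_blockPt, update_eq_self]

end Concatenation

theorem infinite_concatenation_continuous_general {X : Type*} [TopologicalSpace X] (x₀ : X) (n : ℕ)
    (f : ℕ → C((Fin (n + 1) → I), X))
    (hbd : ∀ k, ∀ z ∈ Cube.boundary (Fin (n + 1)), f k z = x₀)
    (hcl : ClustersAt f x₀) :
    ∃ F : C((Fin (n + 1) → I), X),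
      (∀ z ∈ Cube.boundary (Fin (n + 1)), F z = x₀) ∧
      (∀ (k : ℕ) (z : Fin (n + 1) → I),
        F (Function.update z 0 (blockPt k (z 0))) = f k z) ∧
      (∀ z : Fin (n + 1) → I, z 0 = 1 → F z = x₀) :=
  ⟨⟨infConcat x₀ f, continuous_infConcat hbd hcl⟩, fun _ => infConcat_of_mem_boundary hbd,
    infConcat_update_blockPt hbd, fun _ => infConcat_of_eq_one⟩

/-- **Continuity of infinite concatenations.** If `X` is a path-connected Hausdorff space,
`α` a path from `x₀` to `y`, and `{f_k}` a sequence of `n`-loops at `x₀` converging to `x₀`,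
then the infinite concatenation `∏_k f_k` — placing `f_k`, rescaled, on the block
`R_k = [k/(k+1),(k+1)/(k+2)] × I^{n-1}` and sending the complement of the blocks (the face
where the first coordinate is `1`) to `x₀` — exists as a continuous map
`(I^n, ∂I^n) → (X, x₀)`. -/
theorem infinite_concatenation_continuous {X : Type*} [TopologicalSpace X] [T2Space X]
    [PathConnectedSpace X] (x₀ y : X) (α : Path x₀ y) (n : ℕ)
    (f : ℕ → C((Fin (n + 1) → I), X))
    (hbd : ∀ k, ∀ z ∈ Cube.boundary (Fin (n + 1)), f k z = x₀)
    (hcl : ClustersAt f x₀) :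
    ∃ F : C((Fin (n + 1) → I), X),
      (∀ z ∈ Cube.boundary (Fin (n + 1)), F z = x₀) ∧
      (∀ (k : ℕ) (z : Fin (n + 1) → I),
        F (Function.update z 0 (blockPt k (z 0))) = f k z) ∧
      (∀ z : Fin (n + 1) → I, z 0 = 1 → F z = x₀) :=
  infinite_concatenation_continuous_general x₀ n f hbd hcl
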